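/- arXiv:2206.14419 — 3 statements merged into one kernel-verified Lean document; each statement's English description precedes it below -/
import Mathlib

section
/- Let (Y, ‖·‖) be a Banach space and B : Y → Y a linear operator. Suppose there exist λ₁, λ₂ ∈ [0,1) such that ‖By − y‖ ≤ λ₁‖y‖ + λ₂‖By‖ for all y ∈ Y. Then B is a topological isomorphism (bijective with continuous inverse), and for all y ∈ Y, ((1−λ₂)/(1+λ₁))‖y‖ ≤ ‖B⁻¹y‖ ≤ ((1+λ₂)/(1−λ₁))‖y‖. -/
/-- Lemma (CC, Lemma 1): a linear operator `B` on a Banach space with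
`‖By − y‖ ≤ λ₁‖y‖ + λ₂‖By‖` for `λ₁, λ₂ ∈ [0,1)` is a topological isomorphism, with
`((1−λ₂)/(1+λ₁))‖y‖ ≤ ‖B⁻¹y‖ ≤ ((1+λ₂)/(1−λ₁))‖y‖`. -/
theorem stmt0 {Y : Type*} [NormedAddCommGroup Y] [NormedSpace ℝ Y] [CompleteSpace Y]
    (B : Y →ₗ[ℝ] Y) (l1 l2 : ℝ) (hl1 : 0 ≤ l1) (hl1' : l1 < 1) (hl2 : 0 ≤ l2) (hl2' : l2 < 1)
    (h : ∀ y : Y, ‖B y - y‖ ≤ l1 * ‖y‖ + l2 * ‖B y‖) :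
    ∃ e : Y ≃L[ℝ] Y, (∀ y, e y = B y) ∧
      ∀ y : Y, (1 - l2) / (1 + l1) * ‖y‖ ≤ ‖e.symm y‖ ∧
        ‖e.symm y‖ ≤ (1 + l2) / (1 - l1) * ‖y‖ := by
  rcases subsingleton_or_nontrivial Y with hY | hY
  · refine ⟨ContinuousLinearEquiv.refl ℝ Y, fun y => Subsingleton.elim _ _, fun y => ?_⟩
    have h0 : ∀ z : Y, ‖z‖ = 0 := fun z => by rw [Subsingleton.elim z 0, norm_zero]
    rw [h0, h0]
    constructor <;> simp
  -- upper bound for B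
  have hup : ∀ y : Y, ‖B y‖ ≤ (1 + l1) / (1 - l2) * ‖y‖ := by
    intro y
    have h1 : ‖B y‖ - ‖y‖ ≤ ‖B y - y‖ := norm_sub_norm_le _ _
    have h2 := h y
    rw [div_mul_eq_mul_div, le_div_iff₀ (by linarith)]
    nlinarith [norm_nonneg y, norm_nonneg (B y)]
  have hup2 : ∀ y : Y, (1 - l2) * ‖B y‖ ≤ (1 + l1) * ‖y‖ := by
    intro y
    have h1 : ‖B y‖ - ‖y‖ ≤ ‖B y - y‖ := norm_sub_norm_le _ _
    have h2 := h y
    nlinarith [norm_nonneg y, norm_nonneg (B y)]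
  -- lower bound for B
  have hlow : ∀ y : Y, (1 - l1) * ‖y‖ ≤ (1 + l2) * ‖B y‖ := by
    intro y
    have h1 : ‖y‖ - ‖B y‖ ≤ ‖B y - y‖ := by
      rw [norm_sub_rev]; exact norm_sub_norm_le _ _
    have h2 := h y
    nlinarith [norm_nonneg y, norm_nonneg (B y)]
  set Bc : Y →L[ℝ] Y := B.mkContinuous ((1 + l1) / (1 - l2)) hup with hBc
  have hBcy : ∀ y, Bc y = B y := fun y => rfl
  set m : ℝ := (1 - max l1 l2) / (1 + l2) with hm
  have hmax : max l1 l2 < 1 := by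
    rcases max_cases l1 l2 with ⟨hc, _⟩ | ⟨hc, _⟩ <;> rw [hc] <;> linarith
  have hm0 : 0 < m := by
    apply div_pos <;> linarith
  set f : ℝ → (Y →L[ℝ] Y) := fun t => (1 - t) • (1 : Y →L[ℝ] Y) + t • Bc with hf
  have hfy : ∀ t y, f t y = (1 - t) • y + t • B y := by
    intro t y; simp [hf, hBcy]
  have key : ∀ t ∈ Set.Icc (0:ℝ) 1, ∀ y : Y, m * ‖y‖ ≤ ‖f t y‖ := by
    intro t ht y
    obtain ⟨ht0, ht1⟩ := ht
    have h2 := h y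
    have e1 : y - f t y = t • (y - B y) := by
      rw [hfy]; module
    have e2 : t • B y = f t y - (1 - t) • y := by
      rw [hfy]; module
    have h3 : ‖y‖ - ‖f t y‖ ≤ t * ‖B y - y‖ := by
      calc ‖y‖ - ‖f t y‖ ≤ ‖y - f t y‖ := norm_sub_norm_le _ _
        _ = t * ‖y - B y‖ := by rw [e1, norm_smul, Real.norm_eq_abs, abs_of_nonneg ht0]
        _ = t * ‖B y - y‖ := by rw [norm_sub_rev]
    have h4 : t * ‖B y‖ ≤ ‖f t y‖ + (1 - t) * ‖y‖ := by
      calc t * ‖B y‖ = ‖t • B y‖ := by rw [norm_smul, Real.norm_eq_abs, abs_of_nonneg ht0]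
        _ = ‖f t y - (1 - t) • y‖ := by rw [e2]
        _ ≤ ‖f t y‖ + ‖(1 - t) • y‖ := norm_sub_le _ _
        _ = ‖f t y‖ + (1 - t) * ‖y‖ := by
            rw [norm_smul, Real.norm_eq_abs, abs_of_nonneg (by linarith)]
    have h5 : t * l1 + (1 - t) * l2 ≤ max l1 l2 := by
      have := le_max_left l1 l2
      have := le_max_right l1 l2
      nlinarith
    rw [hm, div_mul_eq_mul_div, div_le_iff₀ (by linarith)]
    nlinarith [norm_nonneg y, norm_nonneg (B y), norm_nonneg (f t y),
      mul_le_mul_of_nonneg_left h2 ht0]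
  -- norm bound on inverses of units in the family
  have hinv : ∀ s ∈ Set.Icc (0:ℝ) 1, ∀ u : (Y →L[ℝ] Y)ˣ, (↑u : Y →L[ℝ] Y) = f s →
      ‖(↑u⁻¹ : Y →L[ℝ] Y)‖ ≤ 1 / m := by
    intro s hs u hu
    apply ContinuousLinearMap.opNorm_le_bound _ (by positivity)
    intro y
    have h1 := key s hs ((↑u⁻¹ : Y →L[ℝ] Y) y)
    have h2 : f s ((↑u⁻¹ : Y →L[ℝ] Y) y) = y := by
      rw [← hu]
      calc (↑u : Y →L[ℝ] Y) ((↑u⁻¹ : Y →L[ℝ] Y) y)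
          = ((↑u * ↑u⁻¹ : Y →L[ℝ] Y)) y := rfl
        _ = ((1 : Y →L[ℝ] Y)) y := by rw [Units.mul_inv]
        _ = y := rfl
    rw [h2] at h1
    rw [one_div, inv_mul_eq_div, le_div_iff₀ hm0]
    linarith
  have hnortrivial : Nontrivial (Y →L[ℝ] Y) := by
    obtain ⟨y0, hy0⟩ := exists_ne (0 : Y)
    refine ⟨0, 1, fun hc => hy0 ?_⟩
    have := DFunLike.congr_fun hc y0
    simpa using this.symm
  set d : ℝ := m / (‖Bc - 1‖ + 1) with hd
  have hd0 : 0 < d := by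
    apply div_pos hm0; positivity
  -- the stepping lemma
  have step : ∀ s t : ℝ, s ∈ Set.Icc (0:ℝ) 1 → t ∈ Set.Icc (0:ℝ) 1 → |t - s| ≤ d →
      IsUnit (f s) → IsUnit (f t) := by
    intro s t hs ht hdist hu
    obtain ⟨u, hu⟩ := hu
    have hn : ‖(↑u⁻¹ : Y →L[ℝ] Y)‖ ≤ 1 / m := hinv s hs u hu
    have hpos : 0 < ‖(↑u⁻¹ : Y →L[ℝ] Y)‖ := Units.norm_pos u⁻¹
    have hge : m ≤ ‖(↑u⁻¹ : Y →L[ℝ] Y)‖⁻¹ := by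
      rw [inv_eq_one_div, le_div_iff₀ hpos]
      calc m * ‖(↑u⁻¹ : Y →L[ℝ] Y)‖ ≤ m * (1 / m) :=
            mul_le_mul_of_nonneg_left hn (le_of_lt hm0)
        _ = 1 := mul_one_div_cancel (ne_of_gt hm0)
    have hdiff : f t - ↑u = (t - s) • (Bc - 1) := by
      rw [hu]; simp only [hf]; module
    have hlt : ‖f t - ↑u‖ < ‖(↑u⁻¹ : Y →L[ℝ] Y)‖⁻¹ := by
      have h1 : ‖f t - ↑u‖ = |t - s| * ‖Bc - 1‖ := by
        rw [hdiff]
        rw [norm_smul (t - s) (Bc - 1), Real.norm_eq_abs]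
      have h2 : |t - s| * ‖Bc - 1‖ < m := by
        have hb : (0:ℝ) ≤ ‖Bc - 1‖ := norm_nonneg _
        have h3 : |t - s| * ‖Bc - 1‖ ≤ d * ‖Bc - 1‖ :=
          mul_le_mul_of_nonneg_right hdist hb
        have h4 : d * (‖Bc - 1‖ + 1) = m := div_mul_cancel₀ _ (by positivity)
        nlinarith
      linarith [h1 ▸ h2, hge]
    exact (u.ofNearby (f t) hlt).isUnit
  -- chain from 0 to 1
  have main : ∀ n : ℕ, IsUnit (f (min 1 (n * d))) := by
    intro n
    induction n with
    | zero =>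
      have : min (1:ℝ) ((0:ℕ) * d) = 0 := by simp
      rw [this]
      have : f 0 = 1 := by simp [hf]
      rw [this]; exact isUnit_one
    | succ n ih =>
      have hdn : (0:ℝ) ≤ (n:ℝ) * d := by positivity
      have hcast : ((n + 1 : ℕ) : ℝ) = (n : ℝ) + 1 := by push_cast; ring
      have hA : min 1 ((n:ℝ) * d) ≤ min 1 (((n:ℝ) + 1) * d) := by
        apply min_le_min le_rfl; nlinarith
      have hB : min 1 (((n:ℝ) + 1) * d) ≤ min 1 ((n:ℝ) * d) + d := by
        rcases le_total 1 ((n:ℝ) * d) with hc | hc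
        · calc min 1 (((n:ℝ) + 1) * d) ≤ 1 := min_le_left _ _
            _ ≤ min 1 ((n:ℝ) * d) + d := by rw [min_eq_left hc]; linarith
        · calc min 1 (((n:ℝ) + 1) * d) ≤ ((n:ℝ) + 1) * d := min_le_right _ _
            _ = (n:ℝ) * d + d := by ring
            _ ≤ min 1 ((n:ℝ) * d) + d := by rw [min_eq_right hc]
      rw [hcast]
      apply step (min 1 ((n:ℝ) * d)) (min 1 (((n:ℝ) + 1) * d))
      · exact ⟨le_min (by norm_num) hdn, min_le_left _ _⟩
      · exact ⟨le_min (by norm_num) (by positivity), min_le_left _ _⟩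
      · rw [abs_le]; constructor <;> linarith
      · exact ih
  -- conclude Bc is a unit
  obtain ⟨N, hN⟩ := exists_nat_ge (1 / d)
  have hNd : (1:ℝ) ≤ (N:ℝ) * d := by
    calc (1:ℝ) = (1 / d) * d := by field_simp
      _ ≤ (N:ℝ) * d := mul_le_mul_of_nonneg_right hN (le_of_lt hd0)
  have h1unit : IsUnit (f 1) := by
    have := main N
    rwa [min_eq_left hNd] at this
  have hf1 : f 1 = Bc := by simp [hf]
  rw [hf1] at h1unit
  obtain ⟨u, hu⟩ := h1unit
  -- build the equivalence
  have hleft : Function.LeftInverse (↑u⁻¹ : Y →L[ℝ] Y) Bc := by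
    intro x
    rw [← hu]
    calc (↑u⁻¹ : Y →L[ℝ] Y) ((↑u : Y →L[ℝ] Y) x)
        = ((↑u⁻¹ * ↑u : Y →L[ℝ] Y)) x := rfl
      _ = ((1 : Y →L[ℝ] Y)) x := by rw [Units.inv_mul]
      _ = x := rfl
  have hright : Function.RightInverse (↑u⁻¹ : Y →L[ℝ] Y) Bc := by
    intro x
    rw [← hu]
    calc (↑u : Y →L[ℝ] Y) ((↑u⁻¹ : Y →L[ℝ] Y) x)
        = ((↑u * ↑u⁻¹ : Y →L[ℝ] Y)) x := rfl
      _ = ((1 : Y →L[ℝ] Y)) x := by rw [Units.mul_inv]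
      _ = x := rfl
  set e : Y ≃L[ℝ] Y := ContinuousLinearEquiv.equivOfInverse Bc (↑u⁻¹) hleft hright with he
  refine ⟨e, fun y => rfl, fun y => ?_⟩
  set x := e.symm y with hx
  have hxy : B x = y := by
    rw [← hBcy]
    calc Bc x = e x := rfl
      _ = y := by rw [hx, ContinuousLinearEquiv.apply_symm_apply]
  constructor
  · rw [div_mul_eq_mul_div, div_le_iff₀ (by linarith : (0:ℝ) < 1 + l1)]
    have := hup2 x
    rw [hxy] at this
    linarith
  · rw [div_mul_eq_mul_div, le_div_iff₀ (by linarith : (0:ℝ) < 1 - l1)]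
    have := hlow x
    rw [hxy] at this
    linarith
end

section
/- Let Y be a Banach space, L : Y → Y a bounded linear operator, and F : Y → Y a linear operator satisfying ‖f − F(f)‖ ≤ α(‖F(f)‖ + ‖L‖·‖f‖) for all f ∈ Y, where 0 ≤ α < 1 and α < ‖L‖⁻¹. Then F is a topological isomorphism of Y. -/
set_option maxHeartbeats 1000000 in
/-- Theorem 3.3 (abstracted): if `‖f − F f‖ ≤ α(‖F f‖ + ‖L‖‖f‖)` with `0 ≤ α < 1` and
`α < ‖L‖⁻¹`, then `F` is a topological isomorphism of the Banach space `Y`. -/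
theorem stmt1 {Y : Type*} [NormedAddCommGroup Y] [NormedSpace ℝ Y] [CompleteSpace Y]
    (L : Y →L[ℝ] Y) (F : Y →ₗ[ℝ] Y) (α : ℝ) (hα0 : 0 ≤ α) (hα1 : α < 1)
    (hαL : α < ‖L‖⁻¹)
    (h : ∀ f : Y, ‖f - F f‖ ≤ α * (‖F f‖ + ‖L‖ * ‖f‖)) :
    ∃ e : Y ≃L[ℝ] Y, ∀ f, e f = F f := by
  by_cases hY : Subsingleton Y
  · exact ⟨ContinuousLinearEquiv.refl ℝ Y, fun f => Subsingleton.elim _ _⟩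
  have : Nontrivial Y := not_subsingleton_iff_nontrivial.mp hY
  -- ‖L‖ > 0 and α‖L‖ < 1
  have hL0 : 0 < ‖L‖ := by
    rcases (norm_nonneg L).lt_or_eq with h' | h'
    · exact h'
    · exfalso; rw [← h'] at hαL; simp at hαL; linarith
  have hl1 : α * ‖L‖ < 1 := by
    have := mul_lt_mul_of_pos_right hαL hL0
    rwa [inv_mul_cancel₀ hL0.ne'] at this
  set l1 : ℝ := α * ‖L‖ with hl1def
  have hl1nn : 0 ≤ l1 := mul_nonneg hα0 hL0.le
  -- F is bounded
  have hbound : ∀ f : Y, ‖F f‖ ≤ ((1 + l1) / (1 - α)) * ‖f‖ := by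
    intro f
    have h1 := h f
    have h2 : ‖F f‖ ≤ ‖f‖ + ‖f - F f‖ := by
      calc ‖F f‖ = ‖f - (f - F f)‖ := by rw [sub_sub_cancel]
        _ ≤ ‖f‖ + ‖f - F f‖ := norm_sub_le _ _
    rw [div_mul_eq_mul_div, le_div_iff₀ (by linarith)]
    nlinarith [norm_nonneg f, norm_nonneg (F f)]
  set B : Y →L[ℝ] Y := F.mkContinuous _ hbound with hBdef
  have hB : ∀ f, B f = F f := fun f => rfl
  set T : Y →L[ℝ] Y := 1 - B with hTdef
  clear_value T B
  set m : ℝ := max l1 α with hmdef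
  have hm1 : m < 1 := max_lt hl1 hα1
  have hm0 : 0 ≤ m := le_trans hα0 (le_max_right _ _)
  set c : ℝ := (1 - m) / (1 + α) with hcdef
  have hc0 : 0 < c := div_pos (by linarith) (by linarith)
  -- key uniform lower bound
  have hlow : ∀ t : ℝ, 0 ≤ t → t ≤ 1 → ∀ y : Y, c * ‖y‖ ≤ ‖(1 - t • T) y‖ := by
    intro t ht0 ht1 y
    have happ : (1 - t • T) y = y - t • (y - B y) := by
      simp [hTdef, sub_smul, smul_sub]
    rw [happ]
    set a := ‖y‖
    set b := ‖B y‖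
    set d := ‖y - B y‖
    set v := ‖y - t • (y - B y)‖
    have hd : d ≤ l1 * a + α * b := by
      have := h y
      rw [← hB] at this
      simpa [hl1def] using by nlinarith [this]
    have hb : b ≤ v + (1 - t) * d := by
      have : B y = (y - t • (y - B y)) - (1 - t) • (y - B y) := by module
      calc b = ‖(y - t • (y - B y)) - (1 - t) • (y - B y)‖ := by rw [← this]
        _ ≤ v + ‖(1 - t) • (y - B y)‖ := norm_sub_le _ _
        _ = v + |1 - t| * d := by rw [norm_smul, Real.norm_eq_abs]
        _ = v + (1 - t) * d := by rw [abs_of_nonneg (by linarith)]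
    have ha : a ≤ v + t * d := by
      have : y = (y - t • (y - B y)) + t • (y - B y) := by module
      calc a = ‖(y - t • (y - B y)) + t • (y - B y)‖ := by rw [← this]
        _ ≤ v + ‖t • (y - B y)‖ := norm_add_le _ _
        _ = v + t * d := by rw [norm_smul, Real.norm_eq_abs, abs_of_nonneg ht0]
    -- combine
    have hconv : (1 - t) * α + t * l1 ≤ m := by
      have h1 : l1 ≤ m := le_max_left _ _
      have h2 : α ≤ m := le_max_right _ _
      nlinarith
    rw [hcdef, div_mul_eq_mul_div, div_le_iff₀ (by linarith)]
    have hdnn : 0 ≤ d := norm_nonneg _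
    have hvnn : 0 ≤ v := norm_nonneg _
    have hann : 0 ≤ a := norm_nonneg _
    have hbnn : 0 ≤ b := norm_nonneg _
    have k1 : t * d ≤ t * (l1 * a + α * b) := mul_le_mul_of_nonneg_left hd ht0
    have k2 : (t * α) * b ≤ (t * α) * (v + (1 - t) * d) :=
      mul_le_mul_of_nonneg_left hb (mul_nonneg ht0 hα0)
    have hA : (0:ℝ) ≤ 1 - (1 - t) * α := by nlinarith
    have k3 : (1 - (1 - t) * α) * a ≤ (1 - (1 - t) * α) * (v + t * d) :=
      mul_le_mul_of_nonneg_left ha hA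
    have k4 : (1 - m) * a ≤ (1 - (1 - t) * α - t * l1) * a :=
      mul_le_mul_of_nonneg_right (by linarith) hann
    have k5 : (1 - (1 - t) * α + t * α) * v ≤ (1 + α) * v :=
      mul_le_mul_of_nonneg_right (by nlinarith) hvnn
    linarith only [k1, k2, k3, k4, k5]
  -- step lemma
  have step : ∀ s t : ℝ, 0 ≤ s → s ≤ 1 → |t - s| * ‖T‖ < c →
      IsUnit (1 - s • T) → IsUnit (1 - t • T) := by
    intro s t hs0 hs1 hst hu
    obtain ⟨u, hu⟩ := hu
    have hinvle : ‖((u⁻¹ : (Y →L[ℝ] Y)ˣ) : Y →L[ℝ] Y)‖ ≤ c⁻¹ := by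
      apply ContinuousLinearMap.opNorm_le_bound _ (by positivity)
      intro z
      have h1 : c * ‖((u⁻¹ : (Y →L[ℝ] Y)ˣ) : Y →L[ℝ] Y) z‖ ≤ ‖(1 - s • T) (((u⁻¹ : (Y →L[ℝ] Y)ˣ) : Y →L[ℝ] Y) z)‖ :=
        hlow s hs0 hs1 _
      have h2 : (1 - s • T) (((u⁻¹ : (Y →L[ℝ] Y)ˣ) : Y →L[ℝ] Y) z) = z := by
        rw [← hu, ← ContinuousLinearMap.comp_apply, ← ContinuousLinearMap.mul_def,
          u.mul_inv, ContinuousLinearMap.one_apply]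
      rw [h2] at h1
      rw [inv_mul_eq_div, le_div_iff₀ hc0]
      nlinarith [h1]
    have hinvpos : 0 < ‖((u⁻¹ : (Y →L[ℝ] Y)ˣ) : Y →L[ℝ] Y)‖ := Units.norm_pos u⁻¹
    have hcle : c ≤ ‖((u⁻¹ : (Y →L[ℝ] Y)ˣ) : Y →L[ℝ] Y)‖⁻¹ := by
      rw [le_inv_comm₀ hc0 hinvpos]
      exact hinvle
    have hnear : ‖(1 - t • T) - (u : Y →L[ℝ] Y)‖ < ‖((u⁻¹ : (Y →L[ℝ] Y)ˣ) : Y →L[ℝ] Y)‖⁻¹ := by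
      rw [hu]
      have heq : (1 - t • T) - (1 - s • T) = (s - t) • T := by module
      rw [heq, norm_smul ((s - t) : ℝ) T, Real.norm_eq_abs, abs_sub_comm]
      exact lt_of_lt_of_le hst hcle
    exact (Units.ofNearby u _ hnear).isUnit
  -- induction
  obtain ⟨N, hN1, hNbig⟩ : ∃ N : ℕ, 1 ≤ N ∧ ‖T‖ / N < c := by
    refine ⟨⌈‖T‖ / c⌉₊ + 1, le_add_self, ?_⟩
    rw [div_lt_iff₀ (by positivity)]
    have h1 : ‖T‖ / c < (⌈‖T‖ / c⌉₊ + 1 : ℕ) := by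
      push_cast
      exact lt_of_le_of_lt (Nat.le_ceil _) (by linarith)
    calc ‖T‖ = (‖T‖ / c) * c := by field_simp
      _ < ((⌈‖T‖ / c⌉₊ + 1 : ℕ) : ℝ) * c := by
          exact mul_lt_mul_of_pos_right h1 hc0
      _ = c * ((⌈‖T‖ / c⌉₊ + 1 : ℕ) : ℝ) := mul_comm _ _
  have hNpos : (0:ℝ) < N := by exact_mod_cast hN1
  have key : ∀ k : ℕ, k ≤ N → IsUnit (1 - ((k : ℝ) / N) • T) := by
    intro k
    induction k with
    | zero => intro _; simp
    | succ k ih =>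
      intro hk
      have hkN : k ≤ N := le_of_lt (Nat.lt_of_succ_le hk)
      apply step ((k:ℝ)/N) _ (by positivity) _ _ (ih hkN)
      · rw [div_le_one hNpos]; exact_mod_cast hkN
      · have : |((k:ℝ)+1)/N - (k:ℝ)/N| = 1/N := by
          rw [div_sub_div_same]
          simp [abs_of_nonneg (by positivity : (0:ℝ) ≤ 1/(N:ℝ))]
        push_cast
        rw [this]
        calc 1/(N:ℝ) * ‖T‖ = ‖T‖ / N := by ring
          _ < c := hNbig
  have hBunit : IsUnit B := by
    have := key N le_rfl
    rw [div_self hNpos.ne'] at this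
    have h1T : (1 : Y →L[ℝ] Y) - (1:ℝ) • T = B := by
      rw [hTdef]; module
    rwa [h1T] at this
  obtain ⟨u, hu⟩ := hBunit
  refine ⟨ContinuousLinearEquiv.ofUnit u, fun f => ?_⟩
  show (u : Y →L[ℝ] Y) f = F f
  rw [hu, hB]
end

section
/- Suppose for each n ∈ ℕ, N_{1/2^{nN}}(G) ≤ 2·3ⁿ + 2^{nN}·3ⁿ·R·α_max^n with R > 0 and 1/2^{N} < α_max < 1. Then the upper box dimension of G satisfies dim̄_B(G) ≤ 1 + log(3α_max)/(N log 2). -/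
open Filter

/-- Box-counting estimate of Theorem 7.4(2): if the box counts at scales `δ = 1/2^{nN}`
satisfy `N_δ(G) ≤ 2·3ⁿ + 2^{nN}·3ⁿ·R·α_max^n` with `R > 0` and `1/2^N < α_max < 1`,
then the upper box dimension `limsup_n log N_δ(G)/(nN log 2)` is at most
`1 + log(3α_max)/(N log 2)`. -/
theorem stmt19 (Nb : ℕ → ℝ) (N : ℕ) (hN : 1 ≤ N) (R αmax : ℝ) (hR : 0 < R)
    (hα1 : 1 / 2 ^ N < αmax) (hα2 : αmax < 1) (hNb1 : ∀ n, 1 ≤ Nb n)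
    (h : ∀ n : ℕ, Nb n ≤ 2 * 3 ^ n + 2 ^ (n * N) * 3 ^ n * R * αmax ^ n) :
    limsup (fun n : ℕ => Real.log (Nb n) / (n * N * Real.log 2)) atTop
      ≤ 1 + Real.log (3 * αmax) / (N * Real.log 2) := by
  set q : ℝ := 2 ^ N * 3 * αmax with hq
  have h2N : (0:ℝ) < 2 ^ N := by positivity
  have hα0 : 0 < αmax := lt_trans (by positivity) hα1
  have h1 : (1:ℝ) < 2 ^ N * αmax := by
    rw [div_lt_iff₀ h2N] at hα1; linarith
  have hq3 : (3:ℝ) ≤ q := by nlinarith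
  have hq0 : (0:ℝ) < q := by linarith
  have hlog2 : (0:ℝ) < Real.log 2 := Real.log_pos (by norm_num)
  have hN' : (0:ℝ) < (N:ℝ) := by exact_mod_cast hN
  have hlogq : Real.log q = (N:ℝ) * Real.log 2 + Real.log (3 * αmax) := by
    rw [hq, mul_assoc, Real.log_mul (by positivity) (by positivity), Real.log_pow]
  have key : ∀ n : ℕ, Nb n ≤ (2 + R) * q ^ n := by
    intro n
    have h2 : (3:ℝ) ^ n ≤ q ^ n := pow_le_pow_left₀ (by norm_num) hq3 n
    have h3 : (2:ℝ) ^ (n * N) * 3 ^ n * R * αmax ^ n = R * q ^ n := by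
      rw [hq, pow_mul]
      rw [mul_pow, mul_pow]; ring
    calc Nb n ≤ 2 * 3 ^ n + 2 ^ (n * N) * 3 ^ n * R * αmax ^ n := h n
      _ = 2 * 3 ^ n + R * q ^ n := by rw [h3]
      _ ≤ 2 * q ^ n + R * q ^ n := by nlinarith
      _ = (2 + R) * q ^ n := by ring
  set L : ℝ := 1 + Real.log (3 * αmax) / ((N:ℝ) * Real.log 2) with hL
  set c : ℝ := Real.log (2 + R) with hc
  have hev : ∀ᶠ n in atTop, Real.log (Nb n) / ((n:ℝ) * N * Real.log 2)
      ≤ c / ((n:ℝ) * N * Real.log 2) + L := by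
    filter_upwards [eventually_ge_atTop 1] with n hn
    have hn0 : (0:ℝ) < (n:ℝ) := by exact_mod_cast hn
    have hd : (0:ℝ) < (n:ℝ) * N * Real.log 2 := by positivity
    have hNbpos : (0:ℝ) < Nb n := lt_of_lt_of_le one_pos (hNb1 n)
    have hlogle : Real.log (Nb n) ≤ c + n * Real.log q := by
      calc Real.log (Nb n) ≤ Real.log ((2 + R) * q ^ n) :=
            Real.log_le_log hNbpos (key n)
        _ = c + n * Real.log q := by
            rw [Real.log_mul (by linarith) (by positivity), Real.log_pow, hc]
    have : Real.log (Nb n) / ((n:ℝ) * N * Real.log 2)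
        ≤ (c + n * Real.log q) / ((n:ℝ) * N * Real.log 2) :=
      div_le_div_of_nonneg_right hlogle hd.le |>.trans_eq rfl
    refine this.trans_eq ?_
    rw [hlogq, hL]
    field_simp
  have hg : Tendsto (fun n : ℕ => c / ((n:ℝ) * N * Real.log 2) + L) atTop (nhds L) := by
    have h0 : Tendsto (fun n : ℕ => c / ((n:ℝ) * N * Real.log 2)) atTop (nhds 0) := by
      have heq : (fun n : ℕ => c / ((n:ℝ) * N * Real.log 2))
          = fun n : ℕ => (c / ((N:ℝ) * Real.log 2)) * ((n:ℝ))⁻¹ := by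
        funext n; field_simp
      rw [heq]
      have := tendsto_natCast_atTop_atTop (R := ℝ) |>.inv_tendsto_atTop
      simpa using this.const_mul (c / ((N:ℝ) * Real.log 2))
    have := h0.add (tendsto_const_nhds (x := L))
    simpa using this
  have hbdd : IsBoundedUnder (· ≤ ·) atTop
      (fun n : ℕ => c / ((n:ℝ) * N * Real.log 2) + L) := hg.isBoundedUnder_le
  have hcobdd : IsCoboundedUnder (· ≤ ·) atTop
      (fun n : ℕ => Real.log (Nb n) / ((n:ℝ) * N * Real.log 2)) := by
    refine IsBoundedUnder.isCoboundedUnder_le ⟨0, eventually_map.mpr ?_⟩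
    filter_upwards with n
    have hNbpos : (0:ℝ) ≤ Real.log (Nb n) := Real.log_nonneg (hNb1 n)
    exact div_nonneg hNbpos (by positivity)
  calc limsup (fun n : ℕ => Real.log (Nb n) / ((n:ℝ) * N * Real.log 2)) atTop
      ≤ limsup (fun n : ℕ => c / ((n:ℝ) * N * Real.log 2) + L) atTop :=
        limsup_le_limsup hev hcobdd hbdd
    _ = L := hg.limsup_eq
end
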